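/- Let (Ω, ℙ) be a probability space, Z : Ω → ℝ an integrable random variable, N ≥ 1, w : Fin N → ℝ, and τ : Fin N → ℝ with τ i ∈ (0, 1] for all i. For q : Fin N → ℝ define H q := E[∑ i, w i * (q i + (1/τ i) * min (Z − q i, 0))]. Then for every q : Fin N → ℝ and every index i, the function u ↦ H (Function.update q i u) has derivative w i * (1 − ℙ({ω | Z ω ≤ q i}).toReal / τ i) within [q i, ∞) at q i (right partial derivative) and derivative w i * (1 − ℙ({ω | Z ω < q i}).toReal / τ i) within (−∞, q i] at q i (left partial derivative). -/

import Mathlib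

/-!
Only the `i`-th summand of `H` moves with `u`, and it equals
`w i * (u + (1 / τ i) * G u)` with `G u = E[min (Z - u) 0]`. For each `ω` the map
`u ↦ min (Z ω - u) 0` is `1`-Lipschitz, with right derivative `-1_{Z ω ≤ a}` and left derivative
`-1_{Z ω < a}` at `a`; its difference quotients are bounded by `1`, so dominated convergence
gives `-P(Z ≤ a)` and `-P(Z < a)` as the one-sided derivatives of `G`.
-/

open MeasureTheory Filter Set Topology
open scoped NNReal

lemma LipschitzWith.norm_slope_le {E : Type*} [NormedAddCommGroup E] [NormedSpace ℝ E]
    {K : ℝ≥0} {f : ℝ → E} (hf : LipschitzWith K f) (a b : ℝ) : ‖slope f a b‖ ≤ K := by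
  rcases eq_or_ne b a with rfl | hba
  · simp
  have hpos : 0 < ‖b - a‖ := norm_pos_iff.2 (sub_ne_zero.2 hba)
  rw [slope_def_module, norm_smul, norm_inv, inv_mul_le_iff₀ hpos, mul_comm, ← dist_eq_norm,
    ← dist_eq_norm]
  exact hf.dist_le_mul b a

theorem hasDerivWithinAt_integral_of_lipschitzWith {Ω E : Type*} [MeasurableSpace Ω]
    [NormedAddCommGroup E] [NormedSpace ℝ E] [CompleteSpace E]
    {μ : Measure Ω} [IsFiniteMeasure μ] {F : ℝ → Ω → E} {F' : Ω → E} {K : ℝ≥0} {s : Set ℝ}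
    {a : ℝ} (hF : ∀ u, Integrable (F u) μ) (hlip : ∀ᵐ ω ∂μ, LipschitzWith K (F · ω))
    (hderiv : ∀ᵐ ω ∂μ, HasDerivWithinAt (F · ω) (F' ω) s a) :
    HasDerivWithinAt (fun u ↦ ∫ ω, F u ω ∂μ) (∫ ω, F' ω ∂μ) s a := by
  have slope_integral : slope (fun u ↦ ∫ ω, F u ω ∂μ) a = fun u ↦ ∫ ω, slope (F · ω) a u ∂μ := by
    ext u
    simp only [slope_def_module]
    rw [integral_smul, integral_sub (hF u) (hF a)]
  rw [hasDerivWithinAt_iff_tendsto_slope, slope_integral]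
  refine tendsto_integral_filter_of_dominated_convergence (fun _ ↦ K) ?_ ?_ (integrable_const _) ?_
  · refine Eventually.of_forall fun u ↦ ?_
    simp only [slope_def_module]
    exact (((hF u).sub (hF a)).smul _).aestronglyMeasurable
  · exact Eventually.of_forall fun u ↦ hlip.mono fun ω hω ↦ hω.norm_slope_le a u
  · exact hderiv.mono fun ω hω ↦ hasDerivWithinAt_iff_tendsto_slope.1 hω

lemma lipschitzWith_min_sub_zero (z : ℝ) : LipschitzWith 1 fun u : ℝ ↦ min (z - u) 0 :=
  (LipschitzWith.of_dist_le_mul fun u v ↦ by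
    rw [NNReal.coe_one, one_mul, Real.dist_eq, Real.dist_eq, sub_sub_sub_cancel_left,
      abs_sub_comm]).min_const 0

lemma hasDerivWithinAt_min_sub_zero_Ici (z a : ℝ) :
    HasDerivWithinAt (fun u ↦ min (z - u) 0) ((Iic a).indicator (fun _ ↦ -1) z) (Ici a) a := by
  by_cases hz : z ≤ a
  · rw [indicator_of_mem (mem_Iic.2 hz)]
    exact ((hasDerivWithinAt_id a _).const_sub z).congr
      (fun u hu ↦ min_eq_left (by linarith [mem_Ici.1 hu])) (min_eq_left (by linarith))
  · rw [indicator_of_notMem (mt mem_Iic.1 hz)]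
    refine (hasDerivWithinAt_const a _ 0).congr_of_eventuallyEq ?_ (min_eq_right (by linarith))
    filter_upwards [mem_nhdsWithin_of_mem_nhds (Iio_mem_nhds (not_le.1 hz))] with u hu
    exact min_eq_right (by linarith [mem_Iio.1 hu])

lemma hasDerivWithinAt_min_sub_zero_Iic (z a : ℝ) :
    HasDerivWithinAt (fun u ↦ min (z - u) 0) ((Iio a).indicator (fun _ ↦ -1) z) (Iic a) a := by
  by_cases hz : z < a
  · rw [indicator_of_mem (mem_Iio.2 hz)]
    refine ((hasDerivWithinAt_id a _).const_sub z).congr_of_eventuallyEq ?_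
      (min_eq_left (by linarith))
    filter_upwards [mem_nhdsWithin_of_mem_nhds (Ioi_mem_nhds hz)] with u hu
    exact min_eq_left (by linarith [mem_Ioi.1 hu])
  · rw [indicator_of_notMem (mt mem_Iio.1 hz)]
    exact (hasDerivWithinAt_const a _ 0).congr
      (fun u hu ↦ min_eq_right (by linarith [mem_Iic.1 hu])) (min_eq_right (by linarith))

lemma integral_indicator_const_comp {Ω α E : Type*} [MeasurableSpace Ω] [MeasurableSpace α]
    [NormedAddCommGroup E] [NormedSpace ℝ E] [CompleteSpace E] {μ : Measure Ω} {X : Ω → α}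
    (hX : AEMeasurable X μ) {s : Set α} (hs : MeasurableSet s) (c : E) :
    ∫ ω, s.indicator (fun _ ↦ c) (X ω) ∂μ = μ.real (X ⁻¹' s) • c := by
  simp_rw [← indicator_comp_right]
  rw [integral_indicator₀ (hX.nullMeasurable hs)]
  exact setIntegral_const c

lemma hasDerivWithinAt_sum_update {ι : Type*} [Fintype ι] [DecidableEq ι] (f : ι → ℝ → ℝ)
    (q : ι → ℝ) (i : ι) {f' : ℝ} {s : Set ℝ} (h : HasDerivWithinAt (f i) f' s (q i)) :
    HasDerivWithinAt (fun u ↦ ∑ j, f j (Function.update q i u j)) f' s (q i) := by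
  have hsum : ∀ u,
      ∑ j, f j (Function.update q i u j) = f i u + ∑ j ∈ Finset.univ \ {i}, f j (q j) := by
    intro u
    simp_rw [Function.apply_update f]
    rw [Finset.sum_update_of_mem (Finset.mem_univ i)]
  simp_rw [hsum]
  exact h.add_const _

section NegativePartIntegral

variable {Ω : Type*} [MeasurableSpace Ω] {μ : Measure Ω} {Z : Ω → ℝ}

lemma integrable_min_sub_zero [IsFiniteMeasure μ] (hZ : Integrable Z μ) (u : ℝ) :
    Integrable (fun ω ↦ min (Z ω - u) 0) μ :=
  (hZ.sub (integrable_const u)).inf (integrable_const 0)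

theorem hasDerivWithinAt_integral_min_sub_zero_Ici [IsFiniteMeasure μ] (hZ : Integrable Z μ)
    (a : ℝ) :
    HasDerivWithinAt (fun u ↦ ∫ ω, min (Z ω - u) 0 ∂μ) (-μ.real {ω | Z ω ≤ a}) (Ici a) a := by
  have h := hasDerivWithinAt_integral_of_lipschitzWith (integrable_min_sub_zero hZ)
    (ae_of_all _ fun ω ↦ lipschitzWith_min_sub_zero (Z ω))
    (ae_of_all _ fun ω ↦ hasDerivWithinAt_min_sub_zero_Ici (Z ω) a)
  rwa [integral_indicator_const_comp hZ.aemeasurable measurableSet_Iic, smul_neg, smul_eq_mul,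
    mul_one] at h

theorem hasDerivWithinAt_integral_min_sub_zero_Iic [IsFiniteMeasure μ] (hZ : Integrable Z μ)
    (a : ℝ) :
    HasDerivWithinAt (fun u ↦ ∫ ω, min (Z ω - u) 0 ∂μ) (-μ.real {ω | Z ω < a}) (Iic a) a := by
  have h := hasDerivWithinAt_integral_of_lipschitzWith (integrable_min_sub_zero hZ)
    (ae_of_all _ fun ω ↦ lipschitzWith_min_sub_zero (Z ω))
    (ae_of_all _ fun ω ↦ hasDerivWithinAt_min_sub_zero_Iic (Z ω) a)
  rwa [integral_indicator_const_comp hZ.aemeasurable measurableSet_Iio, smul_neg, smul_eq_mul,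
    mul_one] at h

lemma integral_sum_mul_add_mul_min_sub_zero [IsProbabilityMeasure μ] {ι : Type*} [Fintype ι]
    (hZ : Integrable Z μ) (w c q : ι → ℝ) :
    ∫ ω, ∑ i, w i * (q i + c i * min (Z ω - q i) 0) ∂μ
      = ∑ i, w i * (q i + c i * ∫ ω, min (Z ω - q i) 0 ∂μ) := by
  have hint : ∀ i, Integrable (fun ω ↦ c i * min (Z ω - q i) 0) μ := fun i ↦
    (integrable_min_sub_zero hZ _).const_mul _
  have hint' : ∀ i, Integrable (fun ω ↦ w i * (q i + c i * min (Z ω - q i) 0)) μ := fun i ↦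
    ((integrable_const _).add (hint i)).const_mul _
  rw [integral_finsetSum _ fun i _ ↦ hint' i]
  refine Finset.sum_congr rfl fun i _ ↦ ?_
  rw [integral_const_mul, integral_add (integrable_const _) (hint i), integral_const_mul,
    integral_const, probReal_univ, one_smul]

end NegativePartIntegral

theorem stmt_10_general {Ω : Type*} [MeasurableSpace Ω] (P : Measure Ω)
    [IsProbabilityMeasure P] (Z : Ω → ℝ) (hZ : Integrable Z P)
    (N : ℕ) (w : Fin N → ℝ) (τ : Fin N → ℝ)
    (H : (Fin N → ℝ) → ℝ)
    (hH : H = fun q => ∫ ω, ∑ i, w i * (q i + (1 / τ i) * min (Z ω - q i) 0) ∂P)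
    (q : Fin N → ℝ) (i : Fin N) :
    HasDerivWithinAt (fun u : ℝ => H (Function.update q i u))
        (w i * (1 - (P {ω | Z ω ≤ q i}).toReal / τ i))
        (Set.Ici (q i)) (q i) ∧
      HasDerivWithinAt (fun u : ℝ => H (Function.update q i u))
        (w i * (1 - (P {ω | Z ω < q i}).toReal / τ i))
        (Set.Iic (q i)) (q i) := by
  set G : ℝ → ℝ := fun u ↦ ∫ ω, min (Z ω - u) 0 ∂P
  have hH_sum : ∀ q, H q = ∑ j, w j * (q j + 1 / τ j * G (q j)) := fun q ↦ by
    rw [hH]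
    exact integral_sum_mul_add_mul_min_sub_zero hZ w (fun j ↦ 1 / τ j) q
  have partial_deriv : ∀ {s : Set ℝ} {p : ℝ}, HasDerivWithinAt G (-p) s (q i) →
      HasDerivWithinAt (fun u ↦ H (Function.update q i u)) (w i * (1 - p / τ i)) s (q i) := by
    intro s p hG
    simp_rw [hH_sum]
    convert hasDerivWithinAt_sum_update (fun j c ↦ w j * (c + 1 / τ j * G c)) q i
      (((hasDerivWithinAt_id _ _).add (hG.const_mul _)).const_mul (w i)) using 1
    ring
  exact ⟨partial_deriv (hasDerivWithinAt_integral_min_sub_zero_Ici hZ _),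
    partial_deriv (hasDerivWithinAt_integral_min_sub_zero_Iic hZ _)⟩

/-- Explicit subgradient computation of `∂_{q_i} E[h_q(Z)]` in the proof of
Theorem 2: the `i`-th right partial derivative of
`H q = E[∑ i, w i (q i + (1/τ i)(Z − q i)⁻)]` at `q` is
`w i (1 − P(Z ≤ q i)/τ i)` and the left partial derivative is
`w i (1 − P(Z < q i)/τ i)`. -/
theorem stmt_10 {Ω : Type*} [MeasurableSpace Ω] (P : Measure Ω)
    [IsProbabilityMeasure P] (Z : Ω → ℝ) (hZ : Integrable Z P)
    (N : ℕ) (hN : 1 ≤ N) (w : Fin N → ℝ) (τ : Fin N → ℝ)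
    (hτ : ∀ i, 0 < τ i ∧ τ i ≤ 1)
    (H : (Fin N → ℝ) → ℝ)
    (hH : H = fun q => ∫ ω, ∑ i, w i * (q i + (1 / τ i) * min (Z ω - q i) 0) ∂P)
    (q : Fin N → ℝ) (i : Fin N) :
    HasDerivWithinAt (fun u : ℝ => H (Function.update q i u))
        (w i * (1 - (P {ω | Z ω ≤ q i}).toReal / τ i))
        (Set.Ici (q i)) (q i) ∧
      HasDerivWithinAt (fun u : ℝ => H (Function.update q i u))
        (w i * (1 - (P {ω | Z ω < q i}).toReal / τ i))
        (Set.Iic (q i)) (q i) :=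
  stmt_10_general P Z hZ N w τ H hH q i
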